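/- Let p > 0, ε ∈ (0,1] and k an integer with 1 ≤ k ≤ n/2, and let J be the set of indices j ∈ {0,1,…,⌈t⌉−1} for which the level set S_j does not contribute (for the trimmed-k problem). Then Σ_{j∈J} Σ_{i∈S_j} |x_i|^p ≤ 5·ε · (Σ_{i=k+1}^{n−k} |a_i|^p + k·|a_k|^p). -/

import Mathlib

open Finset

noncomputable section

/-- `t = 1 + log_{1+ε} m`, all logarithms natural. -/
def tExp (ε m : ℝ) : ℝ := 1 + Real.log m / Real.log (1 + ε)

/-- The level set `S_j = {i : ζ(1+ε)^{t-j-1} ≤ |x_i| < ζ(1+ε)^{t-j}}`. -/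
def levelSet {n : ℕ} (x : Fin n → ℤ) (ε m ζ : ℝ) (j : ℕ) : Finset (Fin n) :=
  Finset.univ.filter fun i =>
    ζ * (1 + ε) ^ (tExp ε m - (j : ℝ) - 1) ≤ |(x i : ℝ)| ∧
      |(x i : ℝ)| < ζ * (1 + ε) ^ (tExp ε m - (j : ℝ))

/-- `rank(v)`: the number of indices with `|x_i| > v`. -/
def rankOf {n : ℕ} (x : Fin n → ℤ) (v : ℝ) : ℕ :=
  (Finset.univ.filter fun i : Fin n => v < |(x i : ℝ)|).card

/-- `Σ_{i=1}^k |a_i|^p` (paper is 1-indexed; here `a` is 0-indexed). -/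
def topSum {n : ℕ} (a : Fin n → ℤ) (p : ℝ) (k : ℕ) : ℝ :=
  ∑ i ∈ Finset.univ.filter (fun i : Fin n => (i : ℕ) < k), |(a i : ℝ)| ^ p

/-- `Σ_{i=k+1}^n |a_i|^p = ‖x_{-k}‖_p^p` (paper is 1-indexed). -/
def tailSum {n : ℕ} (a : Fin n → ℤ) (p : ℝ) (k : ℕ) : ℝ :=
  ∑ i ∈ Finset.univ.filter (fun i : Fin n => k ≤ (i : ℕ)), |(a i : ℝ)| ^ p

/-- `Σ_{i=k+1}^{n-k} |a_i|^p` (paper is 1-indexed). -/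
def midSum {n : ℕ} (a : Fin n → ℤ) (p : ℝ) (k : ℕ) : ℝ :=
  ∑ i ∈ Finset.univ.filter (fun i : Fin n => k ≤ (i : ℕ) ∧ (i : ℕ) < n - k), |(a i : ℝ)| ^ p

/-- `|a_k|` for paper (1-indexed) index `k`, i.e. 0-indexed entry `k-1`. -/
def aAbs {n : ℕ} (a : Fin n → ℤ) (k : ℕ) : ℝ :=
  if h : k - 1 < n then |(a ⟨k - 1, h⟩ : ℝ)| else 0

/-- `a` is `x` rearranged in non-increasing order of absolute value. -/
def IsRearrangement {n : ℕ} (x a : Fin n → ℤ) : Prop :=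
  (∃ σ : Equiv.Perm (Fin n), ∀ i, a i = x (σ i)) ∧
    ∀ i i' : Fin n, i ≤ i' → |a i'| ≤ |a i|

/-- The level set `S_j` contributes (for the top-`k` problem with exponent `p`). -/
def ContributesTop {n : ℕ} (x a : Fin n → ℤ) (p ε m ζ : ℝ) (j k : ℕ) : Prop :=
  ε ^ 2 / Real.log m * topSum a p k ≤ ∑ i ∈ levelSet x ε m ζ j, |(x i : ℝ)| ^ p

/-- The level set `S_j` contributes (for the trimmed-`k` problem with exponent `p`). -/
def ContributesTrim {n : ℕ} (x a : Fin n → ℤ) (p ε m ζ : ℝ) (j k : ℕ) : Prop :=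
  ε ^ 2 / Real.log m * (midSum a p k + k * aAbs a k ^ p) ≤
    ∑ i ∈ levelSet x ε m ζ j, |(x i : ℝ)| ^ p

/- Each non-contributing level set carries less than `ε² / log m` times the trimmed mass
`B = Σ_{i=k+1}^{n-k} |a_i|^p + k|a_k|^p`, and there are at most `⌈t⌉ ≤ 2 + 3 log m / (2ε)` of them,
because `log (1 + ε) ≥ 2ε/3` for `ε ≤ 1`. Their total is thus at most `(2ε / log m + 3/2) ε B`,
and `log m ≥ log 2 > 4/7` makes the bracket at most `5`. -/

lemma Real.two_div_three_mul_le_log_one_add {x : ℝ} (hx0 : 0 ≤ x) (hx1 : x ≤ 1) :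
    2 / 3 * x ≤ Real.log (1 + x) := by
  refine le_trans ?_ (Real.le_log_one_add_of_nonneg hx0)
  rw [le_div_iff₀ (by linarith)]
  nlinarith

lemma ceil_tExp_le {ε m : ℝ} (hε0 : 0 < ε) (hε1 : ε ≤ 1) (hm : 1 ≤ m) :
    (⌈tExp ε m⌉₊ : ℝ) ≤ 2 + 3 * Real.log m / (2 * ε) := by
  have hlog := Real.two_div_three_mul_le_log_one_add hε0.le hε1
  have hlogm := Real.log_nonneg hm
  have hratio : Real.log m / Real.log (1 + ε) ≤ 3 * Real.log m / (2 * ε) := by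
    rw [div_le_div_iff₀ (by linarith) (by positivity)]
    nlinarith
  have hceil := Nat.ceil_lt_add_one
    (show 0 ≤ tExp ε m from add_nonneg zero_le_one (div_nonneg hlogm (by linarith)))
  unfold tExp at hceil ⊢
  linarith

lemma aAbs_nonneg {n : ℕ} (a : Fin n → ℤ) (k : ℕ) : 0 ≤ aAbs a k := by
  unfold aAbs
  split <;> positivity

lemma midSum_add_mul_aAbs_rpow_nonneg {n : ℕ} (a : Fin n → ℤ) (p : ℝ) (k : ℕ) :
    0 ≤ midSum a p k + k * aAbs a k ^ p := by
  have := aAbs_nonneg a k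
  unfold midSum
  positivity

lemma Finset.sum_filter_le_card_mul {ι R : Type*} [Semiring R] [PartialOrder R] [IsOrderedRing R]
    {s : Finset ι} {f : ι → R} {c : R} {P : ι → Prop} [DecidablePred P]
    (hf : ∀ j ∈ s, P j → f j ≤ c) (hc : 0 ≤ c) :
    ∑ j ∈ s with P j, f j ≤ #s * c := by
  calc ∑ j ∈ s with P j, f j ≤ #{j ∈ s | P j} * c := by
        simpa only [nsmul_eq_mul] using
          sum_le_card_nsmul _ _ c fun j hj => hf j (mem_filter.1 hj).1 (mem_filter.1 hj).2
    _ ≤ #s * c := by gcongr; exact filter_subset _ _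

open scoped Classical in
theorem stmt_11_general (n : ℕ) (x a : Fin n → ℤ) (p ε m ζ : ℝ) (k : ℕ)
    (hε1 : 0 < ε) (hε2 : ε ≤ 1)
    (hm1 : 2 ≤ m) :
    ∑ j ∈ (Finset.range (Nat.ceil (tExp ε m))).filter
        (fun j => ¬ ContributesTrim x a p ε m ζ j k),
      ∑ i ∈ levelSet x ε m ζ j, |(x i : ℝ)| ^ p ≤
      5 * ε * (midSum a p k + k * aAbs a k ^ p) := by
  have hlog2 : Real.log 2 ≤ Real.log m := Real.log_le_log two_pos hm1
  have hlogm : 0 < Real.log m := (Real.log_pos one_lt_two).trans_le hlog2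
  have hB := midSum_add_mul_aAbs_rpow_nonneg a p k
  set B := midSum a p k + k * aAbs a k ^ p
  calc _ ≤ (⌈tExp ε m⌉₊ : ℝ) * (ε ^ 2 / Real.log m * B) := by
        simpa only [card_range] using sum_filter_le_card_mul (s := range ⌈tExp ε m⌉₊)
          (fun j _ (h : ¬ ContributesTrim x a p ε m ζ j k) => (not_le.1 h).le) (by positivity)
    _ ≤ (2 + 3 * Real.log m / (2 * ε)) * (ε ^ 2 / Real.log m * B) := by
        gcongr
        exact ceil_tExp_le hε1 hε2 (by linarith)
    _ = (2 * ε / Real.log m + 3 / 2) * ε * B := by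
        field_simp
    _ ≤ 5 * ε * B := by
        have hε_div : 2 * ε / Real.log m ≤ 7 / 2 := by
          rw [div_le_iff₀ hlogm]
          linarith [Real.log_two_gt_d9]
        gcongr
        linarith

open scoped Classical in
/-- the total `F_p` mass of the non-contributing level sets (trimmed-`k` problem),
over `j ∈ {0,…,⌈t⌉−1}`, is at most `5ε · (Σ_{i=k+1}^{n−k} |a_i|^p + k·|a_k|^p)`. -/
theorem stmt_11 (n : ℕ) (hn : 2 ≤ n) (x a : Fin n → ℤ) (p ε m ζ : ℝ) (k : ℕ)
    (hp : 0 < p) (hε1 : 0 < ε) (hε2 : ε ≤ 1) (hk1 : 1 ≤ k) (hk2 : 2 * k ≤ n)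
    (hra : IsRearrangement x a)
    (hxm : ∀ i, |(x i : ℝ)| ≤ m) (hm1 : 2 ≤ m) (hm2 : m ≤ (n : ℝ))
    (hζ1 : 1 / 2 ≤ ζ) (hζ2 : ζ ≤ 1) :
    ∑ j ∈ (Finset.range (Nat.ceil (tExp ε m))).filter
        (fun j => ¬ ContributesTrim x a p ε m ζ j k),
      ∑ i ∈ levelSet x ε m ζ j, |(x i : ℝ)| ^ p ≤
      5 * ε * (midSum a p k + k * aAbs a k ^ p) :=
  stmt_11_general n x a p ε m ζ k hε1 hε2 hm1
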